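/- Let d ≥ 1 and q ≥ 2 be integers and σ_d the rotation-invariant surface measure on the unit sphere S^d ⊆ ℝ^{d+1}. Let η > d and c > 0 be reals, A ≥ 1 a real, and let ξ₁, …, ξ_q ∈ S^d be pairwise distinct points with separation Δ = min_{i ≠ i'} ‖ξ_i − ξ_{i'}‖. Suppose g₁, …, g_q : S^d → ℝ are measurable and satisfy |g_i(x)| ≤ c · A^{d/2} (1 + A·‖x − ξ_i‖)^{−η} for all x ∈ S^d and i = 1, …, q. Then there exists a constant C = C(c, q, η, d) > 0 (independent of A and of the points ξ_i) such that ∫_{S^d} ∏_{i=1}^q |g_i(x)| dσ_d(x) ≤ C · A^{d(q−2)/2} · (1 + A·Δ)^{−η(q−1)}. (This is the product-integral localization bound of Lemma 2.1 of the paper, stated with explicit localization hypotheses in place of the needlet functions.) -/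

import Mathlib

/-!
The cone over a cap of radius `r` on `S^d` lies in a box of height `2` in the direction of its
centre and width `2r` in the `d` orthogonal directions, so caps have measure `O(r^d)`.
Summing over dyadic shells, `∫ (1 + A‖x - ξ‖)^(-η) dσ(x) = O(A^(-d))` as soon as `η > d`.
At a point `x`, let `ξᵢ₀` be the nearest centre: by the triangle inequality every other `ξᵢ`
is at distance at least `Δ / 2` from `x`, so its decay factor is at most `2^η (1 + AΔ)^(-η)`,
and the product of the `q` decay factors is at most `(2^η (1 + AΔ)^(-η))^(q-1)` times their
sum. Integrating the sum gives `q · O(A^(-d))`, and the amplitudes contribute `(c A^(d/2))^q`.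
-/

open MeasureTheory Metric Set Module
open scoped ENNReal NNReal Pointwise InnerProductSpace

section Cap

variable {E : Type*} [NormedAddCommGroup E] [InnerProductSpace ℝ E] [FiniteDimensional ℝ E]

theorem exists_orthonormalBasis_apply_zero_eq {d : ℕ} (hE : finrank ℝ E = d + 1) {ξ : E}
    (hξ : ‖ξ‖ = 1) : ∃ b : OrthonormalBasis (Fin (d + 1)) ℝ E, b 0 = ξ := by
  have hv : Orthonormal ℝ (({0} : Set (Fin (d + 1))).domRestrict fun _ => ξ) := by
    refine orthonormal_iff_ite.2 fun i j => ?_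
    rw [Subsingleton.elim i j, if_pos rfl]
    simp [hξ]
  obtain ⟨b, hb⟩ := hv.exists_orthonormalBasis_extension_of_card_eq (by simpa using hE)
  exact ⟨b, hb 0 rfl⟩

variable [MeasurableSpace E] [BorelSpace E]

theorem toSphere_closedBall_le {d : ℕ} (hE : finrank ℝ E = d + 1) (ξ : sphere (0 : E) 1)
    {r : ℝ} (hr : 0 ≤ r) :
    (volume : Measure E).toSphere (closedBall ξ r)
      ≤ ENNReal.ofReal ((d + 1) * 2 ^ (d + 1) * r ^ d) := by
  obtain ⟨b, hb⟩ := exists_orthonormalBasis_apply_zero_eq hE (norm_eq_of_mem_sphere ξ)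
  let box : Set (Fin (d + 1) → ℝ) :=
    univ.pi (Fin.cons (Icc (-1) 1) fun _ => Icc (-r) r)
  have hcone : Ioo (0 : ℝ) 1 • (Subtype.val '' closedBall ξ r)
      ⊆ (WithLp.ofLp ∘ b.repr) ⁻¹' box := by
    rintro _ ⟨t, ht, _, ⟨x, hx, rfl⟩, rfl⟩
    rw [mem_closedBall, Subtype.dist_eq, dist_eq_norm] at hx
    have hshrink {a B : ℝ} (h : |a| ≤ B) : t * a ∈ Icc (-B) B := by
      refine abs_le.mp (le_trans ?_ h)
      rw [abs_mul, abs_of_pos ht.1]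
      exact mul_le_of_le_one_left (abs_nonneg a) ht.2.le
    refine mem_univ_pi.2 fun i => ?_
    simp only [Function.comp_apply, map_smul, WithLp.ofLp_smul, Pi.smul_apply, smul_eq_mul]
    refine Fin.cases ?_ (fun j => ?_) i
    · refine hshrink ?_
      calc |b.repr x 0| = |⟪b 0, (x : E)⟫_ℝ| := by rw [b.repr_apply_apply]
        _ ≤ ‖b 0‖ * ‖(x : E)‖ := abs_real_inner_le_norm _ _
        _ = 1 := by rw [b.orthonormal.1 0, norm_eq_of_mem_sphere x, one_mul]
    · refine hshrink ?_
      have hξj : ⟪b j.succ, (ξ : E)⟫_ℝ = 0 := hb ▸ b.orthonormal.2 (Fin.succ_ne_zero j)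
      calc |b.repr x j.succ| = |⟪b j.succ, (x : E) - ξ⟫_ℝ| := by
            rw [b.repr_apply_apply, inner_sub_right, hξj, sub_zero]
        _ ≤ ‖b j.succ‖ * ‖(x : E) - ξ‖ := abs_real_inner_le_norm _ _
        _ ≤ r := by rwa [b.orthonormal.1 j.succ, one_mul]
  have hbox_meas : MeasurableSet box :=
    .univ_pi (Fin.cases measurableSet_Icc fun _ => measurableSet_Icc)
  have hbox : volume box = ENNReal.ofReal 2 * ENNReal.ofReal (2 * r) ^ d := by
    simp only [box, volume_pi_pi, Fin.prod_univ_succ, Fin.cons_zero, Fin.cons_succ,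
      Real.volume_Icc, Finset.prod_const, Finset.card_univ, Fintype.card_fin]
    norm_num [two_mul]
  rw [Measure.toSphere_apply' _ measurableSet_closedBall, hE]
  calc ((d + 1 : ℕ) : ℝ≥0∞) * volume (Ioo (0 : ℝ) 1 • (Subtype.val '' closedBall ξ r))
      ≤ (d + 1 : ℕ) * volume ((WithLp.ofLp ∘ b.repr) ⁻¹' box) := by gcongr
    _ = ENNReal.ofReal ((d + 1) * 2 ^ (d + 1) * r ^ d) := by
      rw [((PiLp.volume_preserving_ofLp _).comp b.measurePreserving_repr).measure_preimage
        hbox_meas.nullMeasurableSet, hbox,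
        ← ENNReal.ofReal_pow (by positivity), ← ENNReal.ofReal_mul zero_le_two,
        ← ENNReal.ofReal_natCast, ← ENNReal.ofReal_mul (by positivity)]
      congr 1
      push_cast
      ring

end Cap

theorem two_rpow_neg_mul_two_pow_lt_one {d : ℕ} {η : ℝ} (hη : d < η) :
    (2 : ℝ) ^ (-η) * 2 ^ d < 1 := by
  rw [← Real.rpow_natCast, ← Real.rpow_add two_pos]
  exact Real.rpow_lt_one_of_one_lt_of_neg one_lt_two (by linarith)

section Decay

variable {X : Type*} [PseudoMetricSpace X] [MeasurableSpace X] [OpensMeasurableSpace X]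

theorem lintegral_one_add_mul_dist_rpow_neg_le (μ : Measure X) (ξ : X) (C : ℝ≥0) (d : ℕ)
    (hμ : ∀ r, 0 ≤ r → μ (closedBall ξ r) ≤ ENNReal.ofReal (C * r ^ d))
    {η A : ℝ} (hη : d < η) (hA : 0 < A) :
    ∫⁻ x, ENNReal.ofReal ((1 + A * dist x ξ) ^ (-η)) ∂μ
      ≤ ENNReal.ofReal (C * 2 ^ d / (1 - 2 ^ (-η) * 2 ^ d) / A ^ d) := by
  set a : ℝ := 2 ^ (-η)
  have ha : 0 < a := by positivity
  have hρ : a * 2 ^ d < 1 := two_rpow_neg_mul_two_pow_lt_one hη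
  have hdyadic : ∀ x, ENNReal.ofReal ((1 + A * dist x ξ) ^ (-η))
      ≤ ∑' k : ℕ,
          (closedBall ξ (2 ^ (k + 1) / A)).indicator (fun _ => ENNReal.ofReal (a ^ k)) x := by
    intro x
    obtain ⟨k, hk, hk'⟩ :=
      exists_nat_pow_near (le_add_of_nonneg_right (by positivity : 0 ≤ A * dist x ξ)) one_lt_two
    refine le_trans ?_ (ENNReal.le_tsum k)
    rw [indicator_of_mem, Real.rpow_pow_comm zero_le_two]
    · exact ENNReal.ofReal_le_ofReal (Real.rpow_le_rpow_of_nonpos (by positivity) hk (by linarith))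
    · rw [mem_closedBall, le_div_iff₀ hA]
      linarith
  calc ∫⁻ x, ENNReal.ofReal ((1 + A * dist x ξ) ^ (-η)) ∂μ
      ≤ ∫⁻ x, ∑' k : ℕ, (closedBall ξ (2 ^ (k + 1) / A)).indicator
          (fun _ => ENNReal.ofReal (a ^ k)) x ∂μ := lintegral_mono hdyadic
    _ = ∑' k : ℕ, ENNReal.ofReal (a ^ k) * μ (closedBall ξ (2 ^ (k + 1) / A)) := by
        rw [lintegral_tsum fun k =>
          (measurable_const.indicator measurableSet_closedBall).aemeasurable]
        simp_rw [lintegral_indicator_const measurableSet_closedBall]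
    _ ≤ ∑' k : ℕ, ENNReal.ofReal (C * 2 ^ d / A ^ d * (a * 2 ^ d) ^ k) := by
        refine ENNReal.tsum_le_tsum fun k => ?_
        calc ENNReal.ofReal (a ^ k) * μ (closedBall ξ (2 ^ (k + 1) / A))
            ≤ ENNReal.ofReal (a ^ k) * ENNReal.ofReal (C * (2 ^ (k + 1) / A) ^ d) := by
              gcongr
              exact hμ _ (by positivity)
          _ = ENNReal.ofReal (C * 2 ^ d / A ^ d * (a * 2 ^ d) ^ k) := by
              rw [← ENNReal.ofReal_mul (by positivity)]
              congr 1
              ring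
    _ = ENNReal.ofReal (C * 2 ^ d / (1 - a * 2 ^ d) / A ^ d) := by
        have hgeom := summable_geometric_of_lt_one (by positivity) hρ
        rw [← ENNReal.ofReal_tsum_of_nonneg (fun k => by positivity) (hgeom.mul_left _),
          tsum_mul_left, tsum_geometric_of_lt_one (by positivity) hρ]
        congr 1
        ring

end Decay

theorem prod_le_pow_mul_sum_of_forall_ne_le {ι : Type*} [Fintype ι] {f : ι → ℝ}
    (hf : ∀ i, 0 ≤ f i) {i₀ : ι} {B : ℝ} (hB : ∀ i ≠ i₀, f i ≤ B) :
    ∏ i, f i ≤ B ^ (Fintype.card ι - 1) * ∑ i, f i := by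
  classical
  calc ∏ i, f i = f i₀ * ∏ i ∈ Finset.univ.erase i₀, f i :=
        (Finset.mul_prod_erase _ _ (Finset.mem_univ i₀)).symm
    _ ≤ (∑ i, f i) * ∏ _i ∈ Finset.univ.erase i₀, B :=
        mul_le_mul (Finset.single_le_sum (fun i _ => hf i) (Finset.mem_univ i₀))
          (Finset.prod_le_prod (fun i _ => hf i) fun i hi => hB i (Finset.ne_of_mem_erase hi))
          (Finset.prod_nonneg fun i _ => hf i) (Finset.sum_nonneg fun i _ => hf i)
    _ = B ^ (Fintype.card ι - 1) * ∑ i, f i := by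
        rw [Finset.prod_const, Finset.card_erase_of_mem (Finset.mem_univ i₀), Finset.card_univ,
          mul_comm]

theorem one_add_mul_rpow_neg_le {A Δ s η : ℝ} (hA : 0 ≤ A) (hΔ : 0 ≤ Δ) (hη : 0 ≤ η)
    (hs : Δ ≤ 2 * s) : (1 + A * s) ^ (-η) ≤ 2 ^ η * (1 + A * Δ) ^ (-η) := by
  have hAs : 0 ≤ A * s := mul_nonneg hA (by linarith)
  calc (1 + A * s) ^ (-η) = 2 ^ η * (2 * (1 + A * s)) ^ (-η) := by
        rw [Real.mul_rpow zero_le_two (by linarith), ← mul_assoc, ← Real.rpow_add two_pos,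
          add_neg_cancel, Real.rpow_zero, one_mul]
    _ ≤ 2 ^ η * (1 + A * Δ) ^ (-η) := by
        refine mul_le_mul_of_nonneg_left (Real.rpow_le_rpow_of_nonpos (by positivity) ?_
          (by linarith)) (by positivity)
        nlinarith [mul_le_mul_of_nonneg_left hs hA]

section

variable {X ι : Type*} [PseudoMetricSpace X] [Fintype ι] [Nonempty ι]

theorem prod_one_add_mul_dist_rpow_neg_le (ξ : ι → X) {A Δ η : ℝ} (hA : 0 ≤ A)
    (hΔ : 0 ≤ Δ) (hη : 0 ≤ η) (hΔξ : ∀ i j, i ≠ j → Δ ≤ dist (ξ i) (ξ j))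
    (x : X) :
    ∏ i, (1 + A * dist x (ξ i)) ^ (-η)
      ≤ (2 ^ η * (1 + A * Δ) ^ (-η)) ^ (Fintype.card ι - 1) *
        ∑ i, (1 + A * dist x (ξ i)) ^ (-η) := by
  obtain ⟨i₀, hi₀⟩ := Finite.exists_min fun i => dist x (ξ i)
  refine prod_le_pow_mul_sum_of_forall_ne_le (i₀ := i₀) (fun i => by positivity) fun i hi =>
    one_add_mul_rpow_neg_le hA hΔ hη ?_
  calc Δ ≤ dist (ξ i) (ξ i₀) := hΔξ i i₀ hi
    _ ≤ dist (ξ i) x + dist x (ξ i₀) := dist_triangle _ _ _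
    _ ≤ 2 * dist x (ξ i) := by rw [dist_comm]; linarith [hi₀ i]

end

section Localization

variable {X ι : Type*} [PseudoMetricSpace X] [MeasurableSpace X] [OpensMeasurableSpace X]
  [Fintype ι] [Nonempty ι]

theorem integral_prod_abs_le_of_localized (μ : Measure X) (C : ℝ≥0) (d : ℕ) (ξ : ι → X)
    (hμ : ∀ i r, 0 ≤ r → μ (closedBall (ξ i) r) ≤ ENNReal.ofReal (C * r ^ d))
    {η A Δ a : ℝ} (hη : d < η) (hA : 0 < A) (hΔ : 0 ≤ Δ)
    (hΔξ : ∀ i j, i ≠ j → Δ ≤ dist (ξ i) (ξ j)) (ha : 0 ≤ a) {g : ι → X → ℝ}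
    (hg : ∀ i, Measurable (g i))
    (hgξ : ∀ i x, |g i x| ≤ a * (1 + A * dist x (ξ i)) ^ (-η)) :
    ∫ x, ∏ i, |g i x| ∂μ
      ≤ a ^ Fintype.card ι * (2 ^ η * (1 + A * Δ) ^ (-η)) ^ (Fintype.card ι - 1) *
        (Fintype.card ι * (C * 2 ^ d / (1 - 2 ^ (-η) * 2 ^ d) / A ^ d)) := by
  set h : ι → X → ℝ := fun i x => (1 + A * dist x (ξ i)) ^ (-η)
  set M := a ^ Fintype.card ι * (2 ^ η * (1 + A * Δ) ^ (-η)) ^ (Fintype.card ι - 1)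
  set K := C * 2 ^ d / (1 - 2 ^ (-η) * 2 ^ d) / A ^ d
  have hM : 0 ≤ M := by positivity
  have hK : 0 ≤ K := by
    have := two_rpow_neg_mul_two_pow_lt_one hη
    exact div_nonneg (div_nonneg (by positivity) (by linarith)) (by positivity)
  have hpt : ∀ x, ∏ i, |g i x| ≤ M * ∑ i, h i x := fun x => calc
    ∏ i, |g i x| ≤ ∏ i, a * h i x :=
        Finset.prod_le_prod (fun i _ => abs_nonneg _) fun i _ => hgξ i x
    _ = a ^ Fintype.card ι * ∏ i, h i x := by
        rw [Finset.prod_mul_distrib, Finset.prod_const, Finset.card_univ]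
    _ ≤ M * ∑ i, h i x := by
        rw [mul_assoc]
        gcongr
        exact prod_one_add_mul_dist_rpow_neg_le ξ hA.le hΔ ((Nat.cast_nonneg d).trans hη.le)
          hΔξ x
  have hh : ∀ i, Measurable fun x => ENNReal.ofReal (h i x) := fun i => by
    fun_prop
  rw [integral_eq_lintegral_of_nonneg_ae (.of_forall fun x => by positivity)
    (Finset.measurable_prod _ fun i _ => (hg i).abs).aestronglyMeasurable]
  refine ENNReal.toReal_le_of_le_ofReal (by positivity) ?_
  calc ∫⁻ x, ENNReal.ofReal (∏ i, |g i x|) ∂μ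
      ≤ ∫⁻ x, ENNReal.ofReal M * ∑ i, ENNReal.ofReal (h i x) ∂μ := by
        refine lintegral_mono fun x => ?_
        rw [← ENNReal.ofReal_sum_of_nonneg fun i _ => by positivity, ← ENNReal.ofReal_mul hM]
        exact ENNReal.ofReal_le_ofReal (hpt x)
    _ = ENNReal.ofReal M * ∑ i, ∫⁻ x, ENNReal.ofReal (h i x) ∂μ := by
        rw [lintegral_const_mul' _ _ ENNReal.ofReal_ne_top, lintegral_finsetSum _ fun i _ => hh i]
    _ ≤ ENNReal.ofReal M * ∑ _i : ι, ENNReal.ofReal K := by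
        gcongr with i
        exact lintegral_one_add_mul_dist_rpow_neg_le μ (ξ i) C d (hμ i) hη hA
    _ = ENNReal.ofReal (M * (Fintype.card ι * K)) := by
        rw [Finset.sum_const, Finset.card_univ, nsmul_eq_mul, ← ENNReal.ofReal_natCast,
          ← ENNReal.ofReal_mul (by positivity), ← ENNReal.ofReal_mul hM]

end Localization

theorem product_localization_integral_bound_general
    (d q : ℕ) (hq : 2 ≤ q) (η c : ℝ) (hη : (d : ℝ) < η) (hc : 0 < c) :
    ∃ C > (0 : ℝ),
      ∀ (A : ℝ), 1 ≤ A →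
      ∀ (ξ : Fin q → sphere (0 : EuclideanSpace ℝ (Fin (d + 1))) 1),
        Function.Injective ξ →
      ∀ (g : Fin q → sphere (0 : EuclideanSpace ℝ (Fin (d + 1))) 1 → ℝ),
        (∀ i, Measurable (g i)) →
        (∀ i (x : sphere (0 : EuclideanSpace ℝ (Fin (d + 1))) 1),
          |g i x| ≤ c * A ^ ((d : ℝ) / 2) *
            (1 + A * ‖(x : EuclideanSpace ℝ (Fin (d + 1)))
                - (ξ i : EuclideanSpace ℝ (Fin (d + 1)))‖) ^ (-η)) →
      ∀ (Δ : ℝ),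
        Δ = ⨅ p : {p : Fin q × Fin q // p.1 ≠ p.2},
              ‖(ξ p.1.1 : EuclideanSpace ℝ (Fin (d + 1)))
                - (ξ p.1.2 : EuclideanSpace ℝ (Fin (d + 1)))‖ →
        ∫ x, ∏ i, |g i x|
            ∂((volume : Measure (EuclideanSpace ℝ (Fin (d + 1)))).toSphere)
          ≤ C * A ^ ((d : ℝ) * ((q : ℝ) - 2) / 2) * (1 + A * Δ) ^ (-(η * ((q : ℝ) - 1))) := by
  set C : ℝ≥0 := (d + 1) * 2 ^ (d + 1)
  set K : ℝ := C * 2 ^ d / (1 - 2 ^ (-η) * 2 ^ d)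
  have hK : 0 < K := by
    have := two_rpow_neg_mul_two_pow_lt_one hη
    exact div_pos (by positivity) (by linarith)
  refine ⟨c ^ q * 2 ^ (η * (q - 1)) * q * K, by positivity, ?_⟩
  intro A hA ξ _ g hg hgξ Δ hΔ
  have hA0 : 0 < A := by linarith
  have hΔ0 : 0 ≤ Δ := hΔ ▸ Real.iInf_nonneg fun _ => norm_nonneg _
  have hΔξ : ∀ i j, i ≠ j → Δ ≤ dist (ξ i) (ξ j) := fun i j hij => by
    rw [hΔ, Subtype.dist_eq, dist_eq_norm]
    exact ciInf_le ⟨0, by rintro _ ⟨p, rfl⟩; exact norm_nonneg _⟩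
      (⟨(i, j), hij⟩ : {p : Fin q × Fin q // p.1 ≠ p.2})
  have : Nonempty (Fin q) := ⟨⟨0, by omega⟩⟩
  have hbound := integral_prod_abs_le_of_localized (a := c * A ^ ((d : ℝ) / 2)) _ C d ξ
    (fun i r hr => by simpa [C] using toSphere_closedBall_le finrank_euclideanSpace_fin (ξ i) hr)
    hη hA0 hΔ0 hΔξ (by positivity) hg
    (fun i x => by simpa only [Subtype.dist_eq, dist_eq_norm] using hgξ i x)
  refine hbound.trans_eq ?_
  have hB : 0 < 1 + A * Δ := by positivity
  have hApow : (A ^ ((d : ℝ) / 2)) ^ q = A ^ ((d : ℝ) * ((q : ℝ) - 2) / 2) * A ^ d := by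
    rw [← Real.rpow_natCast, ← Real.rpow_mul hA0.le, ← Real.rpow_natCast A d,
      ← Real.rpow_add hA0]
    ring_nf
  have hBpow : (2 ^ η * (1 + A * Δ) ^ (-η)) ^ (q - 1)
      = 2 ^ (η * ((q : ℝ) - 1)) * (1 + A * Δ) ^ (-(η * ((q : ℝ) - 1))) := by
    rw [mul_pow, ← Real.rpow_natCast, ← Real.rpow_natCast ((1 + A * Δ) ^ (-η)),
      ← Real.rpow_mul zero_le_two, ← Real.rpow_mul hB.le, Nat.cast_sub (by omega)]
    ring_nf
  rw [Fintype.card_fin, mul_pow, hApow, hBpow]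
  field_simp
  ring

/-- **Product-integral localization bound (Lemma 2.1 of the paper).**
Let `ξ₁, …, ξ_q ∈ S^d` (`q ≥ 2`) be pairwise distinct points with separation
`Δ = min_{i ≠ i'} ‖ξ_i − ξ_{i'}‖`, and let `g₁, …, g_q` satisfy the localization bound
`|g_i(x)| ≤ c A^{d/2} (1 + A‖x − ξ_i‖)^{−η}` with `η > d`. Then
`∫_{S^d} ∏ᵢ |g_i(x)| dσ_d(x) ≤ C A^{d(q−2)/2} (1 + AΔ)^{−η(q−1)}` for a constant
`C = C(c, q, η, d) > 0` independent of `A` and of the points `ξ_i`. -/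
theorem product_localization_integral_bound
    (d q : ℕ) (hd : 1 ≤ d) (hq : 2 ≤ q) (η c : ℝ) (hη : (d : ℝ) < η) (hc : 0 < c) :
    ∃ C > (0 : ℝ),
      ∀ (A : ℝ), 1 ≤ A →
      ∀ (ξ : Fin q → sphere (0 : EuclideanSpace ℝ (Fin (d + 1))) 1),
        Function.Injective ξ →
      ∀ (g : Fin q → sphere (0 : EuclideanSpace ℝ (Fin (d + 1))) 1 → ℝ),
        (∀ i, Measurable (g i)) →
        (∀ i (x : sphere (0 : EuclideanSpace ℝ (Fin (d + 1))) 1),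
          |g i x| ≤ c * A ^ ((d : ℝ) / 2) *
            (1 + A * ‖(x : EuclideanSpace ℝ (Fin (d + 1)))
                - (ξ i : EuclideanSpace ℝ (Fin (d + 1)))‖) ^ (-η)) →
      ∀ (Δ : ℝ),
        Δ = ⨅ p : {p : Fin q × Fin q // p.1 ≠ p.2},
              ‖(ξ p.1.1 : EuclideanSpace ℝ (Fin (d + 1)))
                - (ξ p.1.2 : EuclideanSpace ℝ (Fin (d + 1)))‖ →
        ∫ x, ∏ i, |g i x|
            ∂((volume : Measure (EuclideanSpace ℝ (Fin (d + 1)))).toSphere)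
          ≤ C * A ^ ((d : ℝ) * ((q : ℝ) - 2) / 2) * (1 + A * Δ) ^ (-(η * ((q : ℝ) - 1))) :=
  product_localization_integral_bound_general d q hq η c hη hc
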